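/- For every j ∈ {2,…,n}, t ∈ Γ and k ∈ B, the dynamic-programming recurrence holds: if (i) t_1 ≥ r_j + p_1 and (ii) t_{i+1} ≥ t_i + p_{i+1} for all i ∈ {1,…,m−1}, then g(j,t,k) = min { f_j(t_m) ⊕ g(j−1,t',k') : t' ∈ Γ, k' ∈ B such that for every i ∈ {1,…,m}: if k_i = 1 then t'_i ≤ t_i − p_i, and if k_i > 1 then t'_i = t_i and k'_i = k_i − 1 }, where the minimum over the empty set is +∞; otherwise g(j,t,k) = +∞. -/

import Mathlib

/-- A PFB instance has `m+1` machines and `n+1` jobs. `FeasibleUpTo p b r J c` is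
feasibility of the schedule `c` for the sub-instance `I_J` containing only the jobs
`0,…,J`: release dates are respected on the first machine, consecutive machines leave
enough processing time, two jobs of `I_J` with different completion times on a machine
differ by at least its processing time, and at most `b i` jobs of `I_J` complete at
any given time on machine `i`. -/
def FeasibleUpTo {m n : ℕ} (p b : Fin (m + 1) → ℕ) (r : Fin (n + 1) → ℕ)
    (J : Fin (n + 1)) (c : Fin (m + 1) → Fin (n + 1) → ℕ) : Prop :=
  (∀ j ≤ J, r j + p 0 ≤ c 0 j) ∧
  (∀ (i : Fin m), ∀ j ≤ J, c i.castSucc j + p i.succ ≤ c i.succ j) ∧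
  (∀ (i : Fin (m + 1)), ∀ j ≤ J, ∀ j' ≤ J,
      c i j ≠ c i j' → c i j + p i ≤ c i j' ∨ c i j' + p i ≤ c i j) ∧
  (∀ (i : Fin (m + 1)) (t : ℕ),
      (Finset.univ.filter (fun j => j ≤ J ∧ c i j = t)).card ≤ b i)

/-- `Gamma p r i = { r j' + ∑_{i' ≤ i} λ_{i'}·p_{i'} | j' a job, λ_{i'} ∈ {1,…,n+1} }`. -/
def Gamma {m n : ℕ} (p : Fin (m + 1) → ℕ) (r : Fin (n + 1) → ℕ)
    (i : Fin (m + 1)) : Set ℕ :=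
  { x | ∃ (j' : Fin (n + 1)) (lam : Fin (m + 1) → ℕ),
      (∀ i' ≤ i, 1 ≤ lam i' ∧ lam i' ≤ n + 1) ∧
      x = r j' + ∑ i' ∈ Finset.Iic i, lam i' * p i' }

/-- `𝒮(J,t,k)`: feasible schedules for `I_J` that are ordered by the job indices,
correspond to the completion-time vector `t` and batch-size vector `k` (job `J`
completes machine `i` at time `t i` in a batch of exactly `k i` jobs of `I_J`),
and are Γ-active. -/
def SchedSet {m n : ℕ} (p b : Fin (m + 1) → ℕ) (r : Fin (n + 1) → ℕ)
    (J : Fin (n + 1)) (t k : Fin (m + 1) → ℕ) :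
    Set (Fin (m + 1) → Fin (n + 1) → ℕ) :=
  { c | FeasibleUpTo p b r J c ∧
      (∀ i : Fin (m + 1), ∀ j ≤ J, ∀ j' ≤ J, j ≤ j' → c i j ≤ c i j') ∧
      (∀ i : Fin (m + 1), c i J = t i ∧
        (Finset.univ.filter (fun j' => j' ≤ J ∧ c i j' = t i)).card = k i) ∧
      (∀ i : Fin (m + 1), ∀ j ≤ J, c i j ∈ Gamma p r i) }

/-- The objective value `⊕_{j' ≤ J} f_{j'}(C_{j'})` of a schedule for `I_J`, where
`⊕` is the sum if `useSum = true` and the maximum otherwise. -/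
noncomputable def obj {m n : ℕ} (useSum : Bool) (f : Fin (n + 1) → ℕ → ℝ)
    (J : Fin (n + 1)) (c : Fin (m + 1) → Fin (n + 1) → ℕ) : ℝ :=
  if useSum then ∑ j ∈ Finset.Iic J, f j (c (Fin.last m) j)
  else (Finset.Iic J).sup' ⟨J, Finset.mem_Iic.mpr le_rfl⟩
    fun j => f j (c (Fin.last m) j)

/-- The dynamic-programming value `g(J,t,k)`: the minimum (in `ℝ ∪ {+∞} = EReal`,
with `+∞` for an empty set) of the objective over all schedules in `𝒮(J,t,k)`. -/
noncomputable def g {m n : ℕ} (useSum : Bool) (p b : Fin (m + 1) → ℕ)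
    (r : Fin (n + 1) → ℕ) (f : Fin (n + 1) → ℕ → ℝ) (J : Fin (n + 1))
    (t k : Fin (m + 1) → ℕ) : EReal :=
  sInf { x : EReal | ∃ c ∈ SchedSet p b r J t k, x = ((obj useSum f J c : ℝ) : EReal) }

/-- `combine useSum a x` is `a ⊕ x` in `EReal`: the sum `a + x` if `useSum = true`,
and `max a x` otherwise. -/
noncomputable def combine (useSum : Bool) (a : ℝ) (x : EReal) : EReal :=
  if useSum then (a : EReal) + x else max (a : EReal) x

/-!
Restricting a schedule of `𝒮(j+1, t, k)` to the first `j` jobs gives a schedule of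
`𝒮(j, t', k')`, where `t'`, `k'` record the completion times and batch sizes of job `j`; ordering
and separation force `(t', k')` to be a predecessor state of `(t, k)`. Conversely, appending job
`j+1` at the times `t` to a schedule for a predecessor state keeps it feasible, ordered and
Γ-active: where `k i = 1` the job starts a new batch at least `p i` after every earlier
completion, and where `k i > 1` it joins the batch of job `j`, which then holds exactly `k i`
jobs. The objective splits as `f_{j+1}(t_m) ⊕ obj_j`, and `x ↦ a ⊕ x` commutes with infima in
`EReal` because it is monotone, continuous and fixes `⊤`.
-/

open Finset

lemma monotone_combine (useSum : Bool) (a : ℝ) : Monotone (combine useSum a) := by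
  cases useSum
  · exact fun _ _ h => max_le_max le_rfl h
  · exact fun _ _ h => add_le_add_right h _

lemma continuous_combine (useSum : Bool) (a : ℝ) : Continuous (combine useSum a) := by
  cases useSum
  · exact continuous_const.max continuous_id
  · refine continuous_iff_continuousAt.2 fun _ => ?_
    exact (EReal.continuousAt_add (.inl (EReal.coe_ne_top a)) (.inl (EReal.coe_ne_bot a))).comp
      (continuous_const.prodMk continuous_id).continuousAt

lemma combine_top (useSum : Bool) (a : ℝ) : combine useSum a ⊤ = ⊤ := by
  cases useSum <;> simp [combine]

lemma combine_sInf (useSum : Bool) (a : ℝ) (S : Set EReal) :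
    combine useSum a (sInf S) = sInf (combine useSum a '' S) :=
  (monotone_combine useSum a).map_sInf_of_continuousAt (continuous_combine useSum a).continuousAt
    (combine_top useSum a)

namespace Fin

variable {n : ℕ}

lemma le_succ_iff_eq_or_le_castSucc {i : Fin (n + 1)} {j : Fin n} :
    i ≤ j.succ ↔ i = j.succ ∨ i ≤ j.castSucc := by
  rw [le_iff_eq_or_lt, le_castSucc_iff]

lemma ne_succ_of_le_castSucc {i : Fin (n + 1)} {j : Fin n} (h : i ≤ j.castSucc) : i ≠ j.succ :=
  fun he => (castSucc_lt_succ (i := j)).not_ge (he ▸ h)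

lemma forall_le_succ_iff {P : Fin (n + 1) → Prop} {j : Fin n} :
    (∀ i ≤ j.succ, P i) ↔ P j.succ ∧ ∀ i ≤ j.castSucc, P i := by
  simp only [le_succ_iff_eq_or_le_castSucc, or_imp, forall_and, forall_eq]

lemma Iic_succ_eq_insert (j : Fin n) : Iic j.succ = insert j.succ (Iic j.castSucc) := by
  ext i
  simp [le_succ_iff_eq_or_le_castSucc]

lemma card_filter_le_succ {α : Type*} [DecidableEq α] (x : Fin (n + 1) → α) (j : Fin n)
    (s : α) :
    (univ.filter fun i => i ≤ j.succ ∧ x i = s).card =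
      (univ.filter fun i => i ≤ j.castSucc ∧ x i = s).card + if x j.succ = s then 1 else 0 := by
  have hIic : ∀ J : Fin (n + 1),
      univ.filter (fun i => i ≤ J ∧ x i = s) = (Iic J).filter (x · = s) := by
    intro J
    ext
    simp
  have hnotMem : j.succ ∉ (Iic j.castSucc).filter (x · = s) := by simp
  rw [hIic, hIic, Iic_succ_eq_insert, filter_insert]
  split_ifs
  · rw [card_insert_of_notMem hnotMem]
  · rfl

lemma card_filter_update_succ {α : Type*} [DecidableEq α] (x : Fin (n + 1) → α) (j : Fin n)
    (v s : α) :
    (univ.filter fun i => i ≤ j.succ ∧ Function.update x j.succ v i = s).card =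
      (univ.filter fun i => i ≤ j.castSucc ∧ x i = s).card + if v = s then 1 else 0 := by
  rw [card_filter_le_succ, Function.update_self]
  congr 2
  refine filter_congr fun i _ => and_congr_right fun hi => ?_
  rw [Function.update_of_ne (ne_succ_of_le_castSucc hi)]

end Fin

/-- `(t', k')` can be the state of the previous job when the current job is in state `(t, k)`:
on machine `i` the current job either opens a new batch (`k i = 1`) or joins the batch of the
previous job. -/
def IsPredState {m : ℕ} (p t k t' k' : Fin (m + 1) → ℕ) : Prop :=
  ∀ i, (k i = 1 → t' i + p i ≤ t i) ∧ (1 < k i → t' i = t i ∧ k' i = k i - 1)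

section Schedules

variable {m n : ℕ} {p b : Fin (m + 1) → ℕ} {r : Fin (n + 1) → ℕ}
  {c : Fin (m + 1) → Fin (n + 1) → ℕ} {J : Fin (n + 1)} {t k : Fin (m + 1) → ℕ}

lemma release_le_and_chain_of_mem_schedSet (hc : c ∈ SchedSet p b r J t k) :
    r J + p 0 ≤ t 0 ∧ ∀ i : Fin m, t i.castSucc + p i.succ ≤ t i.succ := by
  obtain ⟨⟨hrel, hchain, -, -⟩, -, htk, -⟩ := hc
  refine ⟨(htk 0).1 ▸ hrel J le_rfl, fun i => ?_⟩
  rw [← (htk i.castSucc).1, ← (htk i.succ).1]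
  exact hchain i J le_rfl

lemma mem_gamma_and_batch_bounds_of_mem_schedSet (hc : c ∈ SchedSet p b r J t k) :
    (∀ i, t i ∈ Gamma p r i) ∧ ∀ i, 1 ≤ k i ∧ k i ≤ b i := by
  obtain ⟨⟨-, -, -, hcap⟩, -, htk, hΓ⟩ := hc
  refine ⟨fun i => (htk i).1 ▸ hΓ i J le_rfl, fun i => ⟨?_, (htk i).2 ▸ hcap i (t i)⟩⟩
  rw [← (htk i).2]
  exact card_pos.2 ⟨J, mem_filter.2 ⟨mem_univ J, le_rfl, (htk i).1⟩⟩

lemma mem_schedSet_of_le {J' : Fin (n + 1)} (hJ : J' ≤ J) (hc : c ∈ SchedSet p b r J t k) :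
    c ∈ SchedSet p b r J' (fun i => c i J')
      (fun i => (univ.filter fun j => j ≤ J' ∧ c i j = c i J').card) := by
  obtain ⟨⟨hrel, hchain, hsep, hcap⟩, hord, -, hΓ⟩ := hc
  refine ⟨⟨fun j hj => hrel j (hj.trans hJ), fun i j hj => hchain i j (hj.trans hJ),
    fun i j hj j' hj' => hsep i j (hj.trans hJ) j' (hj'.trans hJ), fun i s => ?_⟩,
    fun i j hj j' hj' => hord i j (hj.trans hJ) j' (hj'.trans hJ),
    fun i => ⟨rfl, rfl⟩, fun i j hj => hΓ i j (hj.trans hJ)⟩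
  refine (card_le_card fun j => ?_).trans (hcap i s)
  simp only [mem_filter, mem_univ, true_and]
  exact And.imp_left (·.trans hJ)

end Schedules

section PredState

variable {m n : ℕ} {p b : Fin (m + 1) → ℕ} {r : Fin (n + 1) → ℕ} {j : Fin n}
  {t k t' k' : Fin (m + 1) → ℕ}

lemma isPredState_of_mem_schedSet {c : Fin (m + 1) → Fin (n + 1) → ℕ} (hp : ∀ i, 1 ≤ p i)
    (hc : c ∈ SchedSet p b r j.succ t k) :
    IsPredState p t k (fun i => c i j.castSucc)
      (fun i => (univ.filter fun j' => j' ≤ j.castSucc ∧ c i j' = c i j.castSucc).card) := by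
  obtain ⟨⟨-, -, hsep, -⟩, hord, htk, -⟩ := hc
  intro i
  beta_reduce
  have hcard := Fin.card_filter_le_succ (c i) j (t i)
  rw [(htk i).2, (htk i).1, if_pos rfl] at hcard
  have hle : c i j.castSucc ≤ t i :=
    (htk i).1 ▸ hord i _ (Fin.castSucc_le_succ j) _ le_rfl (Fin.castSucc_le_succ j)
  constructor
  · intro hk1
    have hne : c i j.castSucc ≠ t i := fun he => by
      have : j.castSucc ∈ univ.filter fun j' => j' ≤ j.castSucc ∧ c i j' = t i := by simp [he]
      have := card_pos.2 ⟨_, this⟩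
      omega
    rcases hsep i _ (Fin.castSucc_le_succ j) _ le_rfl ((htk i).1 ▸ hne) with h | h
    · exact (htk i).1 ▸ h
    · have := (htk i).1
      have := hp i
      omega
  · intro hk
    obtain ⟨j', hj'⟩ : (univ.filter fun j' => j' ≤ j.castSucc ∧ c i j' = t i).Nonempty :=
      card_pos.1 (by omega)
    obtain ⟨-, hj'le, hj't⟩ := mem_filter.1 hj'
    have ht' : c i j.castSucc = t i :=
      le_antisymm hle (hj't ▸ hord i j' (hj'le.trans (Fin.castSucc_le_succ j)) _
        (Fin.castSucc_le_succ j) hj'le)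
    exact ⟨ht', by rw [ht']; omega⟩

variable {c' : Fin (m + 1) → Fin (n + 1) → ℕ} (hp : ∀ i, 1 ≤ p i)
  (hk : ∀ i, 1 ≤ k i ∧ k i ≤ b i) (hpred : IsPredState p t k t' k')
  (hc' : c' ∈ SchedSet p b r j.castSucc t' k')
include hp hk hpred hc'

lemma eq_or_add_le_of_isPredState (i : Fin (m + 1)) {j' : Fin (n + 1)} (hj' : j' ≤ j.castSucc) :
    c' i j' = t i ∨ c' i j' + p i ≤ t i := by
  obtain ⟨⟨-, -, hsep, -⟩, hord, htk, -⟩ := hc'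
  have hle : c' i j' ≤ t' i := (htk i).1 ▸ hord i j' hj' _ le_rfl hj'
  have := hp i
  rcases (hk i).1.eq_or_lt with hk1 | hk1
  · have := (hpred i).1 hk1.symm
    omega
  · rw [← ((hpred i).2 hk1).1, ← (htk i).1]
    by_cases he : c' i j' = c' i j.castSucc
    · exact .inl he
    · refine .inr ((hsep i j' hj' _ le_rfl he).resolve_right fun h => ?_)
      rw [(htk i).1] at h
      omega

lemma card_filter_eq_of_isPredState (i : Fin (m + 1)) :
    (univ.filter fun j' => j' ≤ j.castSucc ∧ c' i j' = t i).card = k i - 1 := by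
  rcases (hk i).1.eq_or_lt with hk1 | hk1
  · rw [← hk1, card_eq_zero, filter_eq_empty_iff]
    rintro j' - ⟨hj', he⟩
    have := hp i
    have := (hpred i).1 hk1.symm
    have := hc'.2.1 i j' hj' _ le_rfl hj'
    rw [(hc'.2.2.1 i).1] at this
    omega
  · rw [← ((hpred i).2 hk1).1, ← ((hpred i).2 hk1).2, ← (hc'.2.2.1 i).2]

lemma update_mem_schedSet_succ (ht : ∀ i, t i ∈ Gamma p r i) (h0 : r j.succ + p 0 ≤ t 0)
    (hchain : ∀ i : Fin m, t i.castSucc + p i.succ ≤ t i.succ) :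
    (fun i => Function.update (c' i) j.succ (t i)) ∈ SchedSet p b r j.succ t k := by
  have hcard := card_filter_eq_of_isPredState hp hk hpred hc'
  have hnear := eq_or_add_le_of_isPredState hp hk hpred hc'
  obtain ⟨⟨hrel, hch, hsep, hcap⟩, hord, -, hΓ⟩ := hc'
  have upd : ∀ i {j'}, j' ≤ j.castSucc → Function.update (c' i) j.succ (t i) j' = c' i j' :=
    fun i _ hj' => Function.update_of_ne (Fin.ne_succ_of_le_castSucc hj') _ _
  refine ⟨⟨?_, ?_, ?_, ?_⟩, ?_, fun i => ⟨by simp, ?_⟩, ?_⟩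
  · simpa [Fin.forall_le_succ_iff, h0] using fun j' hj' => (upd 0 hj').symm ▸ hrel j' hj'
  · intro i
    simpa [Fin.forall_le_succ_iff, hchain i] using
      fun j' hj' => (upd i.castSucc hj').symm ▸ (upd i.succ hj').symm ▸ hch i j' hj'
  · intro i j1 hj1 j2 hj2 hne
    beta_reduce at hne ⊢
    rcases Fin.le_succ_iff_eq_or_le_castSucc.1 hj1 with rfl | hj1 <;>
      rcases Fin.le_succ_iff_eq_or_le_castSucc.1 hj2 with rfl | hj2
    · exact absurd rfl hne
    · rw [Function.update_self, upd i hj2] at hne ⊢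
      exact .inr ((hnear i hj2).resolve_left (Ne.symm hne))
    · rw [Function.update_self, upd i hj1] at hne ⊢
      exact .inl ((hnear i hj1).resolve_left hne)
    · rw [upd i hj1, upd i hj2] at hne ⊢
      exact hsep i j1 hj1 j2 hj2 hne
  · intro i s
    rw [Fin.card_filter_update_succ]
    split_ifs with hs
    · rw [← hs, hcard i]
      have := hk i
      omega
    · exact hcap i s
  · intro i j1 hj1 j2 hj2 h12
    beta_reduce
    rcases Fin.le_succ_iff_eq_or_le_castSucc.1 hj2 with rfl | hj2
    · rcases Fin.le_succ_iff_eq_or_le_castSucc.1 hj1 with rfl | hj1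
      · rfl
      · rw [Function.update_self, upd i hj1]
        rcases hnear i hj1 with h | h <;> omega
    · rw [upd i hj2, upd i (h12.trans hj2)]
      exact hord i j1 (h12.trans hj2) j2 hj2 h12
  · rw [Fin.card_filter_update_succ, if_pos rfl, hcard i]
    have := hk i
    omega
  · intro i
    simpa [Fin.forall_le_succ_iff, ht i] using fun j' hj' => (upd i hj').symm ▸ hΓ i j' hj'

end PredState

section Objective

variable {m n : ℕ} (useSum : Bool) (f : Fin (n + 1) → ℕ → ℝ)

lemma obj_congr {J : Fin (n + 1)} {c₁ c₂ : Fin (m + 1) → Fin (n + 1) → ℕ}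
    (h : ∀ j ≤ J, c₁ (Fin.last m) j = c₂ (Fin.last m) j) :
    obj useSum f J c₁ = obj useSum f J c₂ := by
  cases useSum
  · simp only [obj, Bool.false_eq_true, if_false]
    exact sup'_congr _ rfl fun j hj => by rw [h j (mem_Iic.1 hj)]
  · simp only [obj, if_true]
    exact sum_congr rfl fun j hj => by rw [h j (mem_Iic.1 hj)]

lemma coe_obj_succ (j : Fin n) (c : Fin (m + 1) → Fin (n + 1) → ℕ) :
    ((obj useSum f j.succ c : ℝ) : EReal) =
      combine useSum (f j.succ (c (Fin.last m) j.succ)) (obj useSum f j.castSucc c) := by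
  have hnotMem : j.succ ∉ Iic j.castSucc := by simp
  cases useSum
  · simp only [obj, combine, Bool.false_eq_true, if_false, Fin.Iic_succ_eq_insert]
    rw [sup'_insert]
    exact EReal.coe_strictMono.monotone.map_max
  · simp only [obj, combine, if_true, Fin.Iic_succ_eq_insert]
    rw [sum_insert hnotMem, EReal.coe_add]

end Objective

noncomputable def recurrenceValue {m n : ℕ} (useSum : Bool) (p b : Fin (m + 1) → ℕ)
    (r : Fin (n + 1) → ℕ) (f : Fin (n + 1) → ℕ → ℝ) (j : Fin n) (t k : Fin (m + 1) → ℕ) :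
    EReal :=
  sInf { x : EReal | ∃ t' k' : Fin (m + 1) → ℕ,
    (∀ i, t' i ∈ Gamma p r i) ∧ (∀ i, 1 ≤ k' i ∧ k' i ≤ b i) ∧ IsPredState p t k t' k' ∧
    x = combine useSum (f j.succ (t (Fin.last m))) (g useSum p b r f j.castSucc t' k') }

section Recurrence

variable {m n : ℕ} {useSum : Bool} {p b : Fin (m + 1) → ℕ} {r : Fin (n + 1) → ℕ}
  {f : Fin (n + 1) → ℕ → ℝ} {j : Fin n} {t k : Fin (m + 1) → ℕ}

lemma g_succ_le_recurrenceValue (hp : ∀ i, 1 ≤ p i) (ht : ∀ i, t i ∈ Gamma p r i)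
    (hk : ∀ i, 1 ≤ k i ∧ k i ≤ b i) (h0 : r j.succ + p 0 ≤ t 0)
    (hchain : ∀ i : Fin m, t i.castSucc + p i.succ ≤ t i.succ) :
    g useSum p b r f j.succ t k ≤ recurrenceValue useSum p b r f j t k := by
  refine le_sInf ?_
  rintro _ ⟨t', k', -, -, hpred, rfl⟩
  conv_rhs => rw [g, combine_sInf]
  refine le_sInf ?_
  rintro _ ⟨_, ⟨c', hc', rfl⟩, rfl⟩
  refine sInf_le ⟨_, update_mem_schedSet_succ hp hk hpred hc' ht h0 hchain, ?_⟩
  have hobj : obj useSum f j.castSucc (fun i => Function.update (c' i) j.succ (t i)) =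
      obj useSum f j.castSucc c' :=
    obj_congr useSum f fun _ hj' => Function.update_of_ne (Fin.ne_succ_of_le_castSucc hj') _ _
  rw [coe_obj_succ, hobj, Function.update_self]

lemma recurrenceValue_le_g_succ (hp : ∀ i, 1 ≤ p i) :
    recurrenceValue useSum p b r f j t k ≤ g useSum p b r f j.succ t k := by
  refine le_sInf ?_
  rintro _ ⟨c, hc, rfl⟩
  have hres := mem_schedSet_of_le (Fin.castSucc_le_succ j) hc
  obtain ⟨hΓ, hB⟩ := mem_gamma_and_batch_bounds_of_mem_schedSet hres
  calc recurrenceValue useSum p b r f j t k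
      ≤ combine useSum (f j.succ (t (Fin.last m))) (g useSum p b r f j.castSucc _ _) :=
        sInf_le ⟨_, _, hΓ, hB, isPredState_of_mem_schedSet hp hc, rfl⟩
    _ ≤ combine useSum (f j.succ (t (Fin.last m))) (obj useSum f j.castSucc c) :=
        monotone_combine _ _ (sInf_le ⟨c, hres, rfl⟩)
    _ = obj useSum f j.succ c := by rw [coe_obj_succ, (hc.2.2.1 _).1]

lemma g_eq_top_of_not_release_le_and_chain {J : Fin (n + 1)}
    (h : ¬ (r J + p 0 ≤ t 0 ∧ ∀ i : Fin m, t i.castSucc + p i.succ ≤ t i.succ)) :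
    g useSum p b r f J t k = ⊤ :=
  sInf_eq_top.2 fun _ ⟨_, hc, _⟩ => absurd (release_le_and_chain_of_mem_schedSet hc) h

end Recurrence

theorem stmt7_general {m n : ℕ} (useSum : Bool) (p b : Fin (m + 1) → ℕ)
    (r : Fin (n + 1) → ℕ) (hp : ∀ i, 1 ≤ p i)
    (f : Fin (n + 1) → ℕ → ℝ)
    (j : Fin n) (t k : Fin (m + 1) → ℕ)
    (ht : ∀ i, t i ∈ Gamma p r i) (hk : ∀ i, 1 ≤ k i ∧ k i ≤ b i) :
    ((r j.succ + p 0 ≤ t 0 ∧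
        (∀ i : Fin m, t i.castSucc + p i.succ ≤ t i.succ)) →
      g useSum p b r f j.succ t k =
        sInf { x : EReal | ∃ t' k' : Fin (m + 1) → ℕ,
          (∀ i, t' i ∈ Gamma p r i) ∧ (∀ i, 1 ≤ k' i ∧ k' i ≤ b i) ∧
          (∀ i, (k i = 1 → t' i + p i ≤ t i) ∧
            (1 < k i → t' i = t i ∧ k' i = k i - 1)) ∧
          x = combine useSum (f j.succ (t (Fin.last m)))
                (g useSum p b r f j.castSucc t' k') }) ∧
    (¬ (r j.succ + p 0 ≤ t 0 ∧
        (∀ i : Fin m, t i.castSucc + p i.succ ≤ t i.succ)) →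
      g useSum p b r f j.succ t k = ⊤) :=
  ⟨fun ⟨h0, hchain⟩ => le_antisymm (g_succ_le_recurrenceValue hp ht hk h0 hchain)
    (recurrenceValue_le_g_succ hp), g_eq_top_of_not_release_le_and_chain⟩

/-- the dynamic-programming recurrence. For a job `j.succ ≥ 1` (i.e. any
job but the first), if (i) `t 0 ≥ r j.succ + p 0` and (ii) `t (i+1) ≥ t i + p (i+1)`
for consecutive machines, then `g(j.succ,t,k)` is the minimum over all `t' ∈ Γ`,
`k' ∈ B` satisfying: for every machine `i`, if `k i = 1` then `t' i ≤ t i - p i`, and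
if `k i > 1` then `t' i = t i` and `k' i = k i - 1`, of
`f j.succ (t_m) ⊕ g(j.castSucc,t',k')`; otherwise `g(j.succ,t,k) = +∞`. -/
theorem stmt7 {m n : ℕ} (useSum : Bool) (p b : Fin (m + 1) → ℕ)
    (r : Fin (n + 1) → ℕ) (hp : ∀ i, 1 ≤ p i) (hb : ∀ i, 1 ≤ b i ∧ b i ≤ n + 1)
    (f : Fin (n + 1) → ℕ → ℝ) (hf : ∀ j, Monotone (f j))
    (j : Fin n) (t k : Fin (m + 1) → ℕ)
    (ht : ∀ i, t i ∈ Gamma p r i) (hk : ∀ i, 1 ≤ k i ∧ k i ≤ b i) :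
    ((r j.succ + p 0 ≤ t 0 ∧
        (∀ i : Fin m, t i.castSucc + p i.succ ≤ t i.succ)) →
      g useSum p b r f j.succ t k =
        sInf { x : EReal | ∃ t' k' : Fin (m + 1) → ℕ,
          (∀ i, t' i ∈ Gamma p r i) ∧ (∀ i, 1 ≤ k' i ∧ k' i ≤ b i) ∧
          (∀ i, (k i = 1 → t' i + p i ≤ t i) ∧
            (1 < k i → t' i = t i ∧ k' i = k i - 1)) ∧
          x = combine useSum (f j.succ (t (Fin.last m)))
                (g useSum p b r f j.castSucc t' k') }) ∧
    (¬ (r j.succ + p 0 ≤ t 0 ∧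
        (∀ i : Fin m, t i.castSucc + p i.succ ≤ t i.succ)) →
      g useSum p b r f j.succ t k = ⊤) :=
  stmt7_general useSum p b r hp f j t k ht hk
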